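/- arXiv:0903.3004 — 3 statements merged into one kernel-verified Lean document; each statement's English description precedes it below -/
import Mathlib

section
/- The free distance of an (n,k,delta) convolutional code C satisfies d_free(C) <= (n-k)(floor(delta/k)+1) + delta + 1 (the generalized Singleton bound). -/
open Polynomial Matrix Finset

/-- Total Hamming weight of the coefficient vectors of a polynomial vector. -/
noncomputable def wt {F : Type*} [Field F] {n : ℕ} (v : Fin n → Polynomial F) : ℕ :=
  ∑ i, (v i).support.card

/-- Hamming weight of the degree-`j` truncation of a polynomial vector. -/
noncomputable def wtTrunc {F : Type*} [Field F] {n : ℕ} (j : ℕ) (v : Fin n → Polynomial F) : ℕ :=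
  ∑ i, ((v i).support.filter (fun m => m ≤ j)).card

/-- The `j`-th column distance of a convolutional code `C ⊆ F[z]^n`. -/
noncomputable def dcol {F : Type*} [Field F] {n : ℕ} (C : Set (Fin n → Polynomial F)) (j : ℕ) : ℕ :=
  sInf {w | ∃ v ∈ C, (fun i => (v i).coeff 0) ≠ (0 : Fin n → F) ∧ wtTrunc j v = w}

/-- The free distance of a convolutional code `C ⊆ F[z]^n`. -/
noncomputable def dfree {F : Type*} [Field F] {n : ℕ} (C : Set (Fin n → Polynomial F)) : ℕ :=
  sInf {w | ∃ v ∈ C, v ≠ 0 ∧ wt v = w}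

/-- The kernel code of a polynomial parity-check matrix given by its coefficient
matrices `H i`: codewords `v(z)` satisfy `∑ i, H_{m-i} v_i = 0` for all `m`. -/
def kerCode {F : Type*} [Field F] {r n : ℕ} (H : ℕ → Matrix (Fin r) (Fin n) F) :
    Set (Fin n → Polynomial F) :=
  {v | ∀ m : ℕ, ∀ a : Fin r,
    ∑ i ∈ Finset.range (m + 1), (H i).mulVec (fun b => (v b).coeff (m - i)) a = 0}

/-- The image code of an `n × k` polynomial generator matrix. -/
def imCode {F : Type*} [Field F] {n k : ℕ} (G : Matrix (Fin n) (Fin k) (Polynomial F)) :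
    Set (Fin n → Polynomial F) :=
  {v | ∃ u : Fin k → Polynomial F, v = G.mulVec u}

/-- The sliding (truncated, lower block triangular Toeplitz) parity-check matrix `H_j`. -/
def slidingH {F : Type*} [Field F] {r n : ℕ} (H : ℕ → Matrix (Fin r) (Fin n) F) (j : ℕ) :
    Matrix (Fin (j+1) × Fin r) (Fin (j+1) × Fin n) F :=
  fun p q => if q.1.val ≤ p.1.val then H (p.1.val - q.1.val) p.2 q.2 else 0

/-- The sliding parity-check matrix `H_j` with rows and columns flattened. -/
def slidingHFlat {F : Type*} [Field F] {r n : ℕ} (hr : 0 < r) (hn : 0 < n)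
    (H : ℕ → Matrix (Fin r) (Fin n) F) (j : ℕ) :
    Matrix (Fin ((j+1)*r)) (Fin ((j+1)*n)) F :=
  fun a b => if b.val / n ≤ a.val / r then
      H (a.val / r - b.val / n) ⟨a.val % r, Nat.mod_lt _ hr⟩ ⟨b.val % n, Nat.mod_lt _ hn⟩
    else 0

/-- The sliding (truncated, lower block triangular Toeplitz) generator matrix `G_j`. -/
def slidingG {F : Type*} [Field F] {n k : ℕ} (G : ℕ → Matrix (Fin n) (Fin k) F) (j : ℕ) :
    Matrix (Fin (j+1) × Fin n) (Fin (j+1) × Fin k) F :=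
  fun p q => if q.1.val ≤ p.1.val then G (p.1.val - q.1.val) p.2 q.2 else 0

/-- The sliding generator matrix `G_j` with rows and columns flattened. -/
def slidingGFlat {F : Type*} [Field F] {n k : ℕ} (hn : 0 < n) (hk : 0 < k)
    (G : ℕ → Matrix (Fin n) (Fin k) F) (j : ℕ) :
    Matrix (Fin ((j+1)*n)) (Fin ((j+1)*k)) F :=
  fun a b => if b.val / k ≤ a.val / n then
      G (a.val / n - b.val / k) ⟨a.val % n, Nat.mod_lt _ hn⟩ ⟨b.val % k, Nat.mod_lt _ hk⟩
    else 0

/-!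
Right multiplication of `G` by a matrix with constant nonzero determinant preserves the code and
keeps the degrees of the maximal minors, and a finite number of such steps makes `G` column
reduced: the leading coefficients of its columns (taken at the column degrees `ν_t`) are linearly
independent. Then `∑ ν_t ≤ δ`, and every input `u` with `deg u_t ≤ j - ν_t` gives a codeword of
degree `≤ j`. For `j = ⌊δ/k⌋` these inputs form a space of dimension `≥ k (j + 1) - δ ≥ 1`, so
forcing `dim - 1` of the `n (j + 1)` coefficients of the codeword to vanish leaves a nonzero
codeword of weight `≤ n (j + 1) - (k (j + 1) - δ) + 1`.
-/

theorem Polynomial.coeff_prod_sum_eq_prod_coeff {R ι : Type*} [CommSemiring R] (s : Finset ι)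
    (f : ι → R[X]) (d : ι → ℕ) (h : ∀ i ∈ s, (f i).natDegree ≤ d i) :
    (∏ i ∈ s, f i).coeff (∑ i ∈ s, d i) = ∏ i ∈ s, (f i).coeff (d i) := by
  classical
  induction s using Finset.induction_on with
  | empty => simp
  | insert a s ha ih =>
    simp only [Finset.forall_mem_insert] at h
    rw [prod_insert ha, sum_insert ha, prod_insert ha,
      coeff_mul_add_eq_of_natDegree_le h.1
        ((natDegree_prod_le s f).trans (sum_le_sum h.2)), ih h.2]

theorem Matrix.coeff_det_sum_eq_det_coeff {R κ : Type*} [CommRing R] [Fintype κ] [DecidableEq κ]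
    (A : Matrix κ κ R[X]) (d : κ → ℕ) (hA : ∀ i t, (A i t).natDegree ≤ d t) :
    A.det.coeff (∑ t, d t) = (Matrix.of fun i t => (A i t).coeff (d t)).det := by
  simp only [det_apply, finsetSum_coeff, Units.smul_def, coeff_smul, of_apply]
  refine sum_congr rfl fun σ _ => ?_
  rw [coeff_prod_sum_eq_prod_coeff _ _ _ fun t _ => hA _ t]

theorem Matrix.exists_det_submatrix_ne_zero_of_linearIndependent {K m κ : Type*} [Field K]
    [Fintype m] [Fintype κ] [DecidableEq κ] (A : Matrix m κ K) (hA : LinearIndependent K Aᵀ) :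
    ∃ s : κ ↪ m, (A.submatrix s id).det ≠ 0 := by
  have hspan : Submodule.span K (Set.range A.row) = ⊤ := by
    apply Submodule.eq_top_of_finrank_eq
    rw [← A.rank_eq_finrank_span_row, ← rank_transpose,
      (show LinearIndependent K Aᵀ.row from hA).rank_matrix, Module.finrank_fintype_fun_eq_card]
  obtain ⟨ι, a, ha, haspan, hali⟩ := exists_linearIndependent' K A.row
  rw [hspan] at haspan
  have : Fintype ι := Fintype.ofInjective a ha
  let b := Module.Basis.mk hali haspan.ge
  let e : κ ≃ ι := Fintype.equivOfCardEq (by simpa using Module.finrank_eq_card_basis b)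
  refine ⟨e.toEmbedding.trans ⟨a, ha⟩, ?_⟩
  rw [← isUnit_iff_ne_zero, ← isUnit_iff_isUnit_det, ← linearIndependent_rows_iff_isUnit]
  exact hali.comp e e.injective

theorem exists_ne_zero_hammingNorm_le {K V ι : Type*} [Field K] [DecidableEq K] [AddCommGroup V]
    [Module K V] [FiniteDimensional K V] [Fintype ι] (f : V →ₗ[K] ι → K)
    (hV : 0 < Module.finrank K V) :
    ∃ x, x ≠ 0 ∧ hammingNorm (f x) ≤ Fintype.card ι + 1 - Module.finrank K V := by
  classical
  obtain ⟨T, -, hT⟩ := exists_subset_card_eq (s := (univ : Finset ι))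
    (n := min (Module.finrank K V - 1) (Fintype.card ι)) (by simp)
  have hker : LinearMap.ker (LinearMap.funLeft K K ((↑) : T → ι) ∘ₗ f) ≠ ⊥ :=
    LinearMap.ker_ne_bot_of_finrank_lt (by simp [hT]; omega)
  obtain ⟨x, hx, hx0⟩ := Submodule.exists_mem_ne_zero_of_ne_bot hker
  refine ⟨x, hx0, ?_⟩
  have hsupp : ({i | f x i ≠ 0} : Finset ι) ⊆ univ \ T := fun i hi => by
    simp only [mem_filter, mem_univ, true_and] at hi
    simp only [mem_sdiff, mem_univ, true_and]
    exact fun hiT => hi (congrFun (LinearMap.mem_ker.mp hx) ⟨i, hiT⟩)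
  calc hammingNorm (f x) ≤ #(univ \ T) := card_le_card hsupp
    _ ≤ _ := by rw [card_univ_sdiff, hT]; omega

theorem Matrix.det_one_updateCol {R κ : Type*} [CommRing R] [Fintype κ] [DecidableEq κ]
    (j : κ) (c : κ → R) : ((1 : Matrix κ κ R).updateCol j c).det = c j := by
  simpa [one_apply] using det_updateCol_sum (1 : Matrix κ κ R) j c

theorem Matrix.det_submatrix_mul {R m κ : Type*} [CommRing R] [Fintype κ] [DecidableEq κ]
    (G : Matrix m κ R) (M : Matrix κ κ R) (s : κ ↪ m) :
    ((G * M).submatrix s id).det = (G.submatrix s id).det * M.det := by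
  rw [← det_mul]; rfl

theorem Matrix.mulVec_injective_of_det_submatrix_ne_zero {R m κ : Type*} [CommRing R]
    [NoZeroDivisors R] [Fintype κ] [DecidableEq κ] (G : Matrix m κ R) (s : κ ↪ m)
    (hs : (G.submatrix s id).det ≠ 0) :
    Function.Injective G.mulVec := fun _ _ h =>
  mulVec_injective_of_det_ne_zero hs (funext fun r => congrFun h (s r))

theorem Function.Injective.mulVec_mul_of_isUnit_det {R m κ : Type*} [CommRing R] [Fintype κ]
    [DecidableEq κ] {G : Matrix m κ R} (hG : Function.Injective G.mulVec) {M : Matrix κ κ R}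
    (hM : IsUnit M.det) : Function.Injective (G * M).mulVec := by
  have := hG.comp (mulVec_injective_of_det_mem_nonZeroDivisors hM.mem_nonZeroDivisors)
  rwa [Function.comp_def, funext fun v => mulVec_mulVec v G M] at this

section ColumnDegrees

variable {R F m κ : Type*} [Fintype m]

noncomputable def colDeg [Semiring R] (G : Matrix m κ R[X]) (t : κ) : ℕ :=
  univ.sup fun i => (G i t).natDegree

theorem natDegree_le_colDeg [Semiring R] (G : Matrix m κ R[X]) (i : m) (t : κ) :
    (G i t).natDegree ≤ colDeg G t :=
  le_sup (f := fun i => (G i t).natDegree) (mem_univ i)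

noncomputable def leadingColCoeff [Semiring R] (G : Matrix m κ R[X]) : Matrix m κ R :=
  of fun i t => (G i t).coeff (colDeg G t)

def IsColReduced [Field F] (G : Matrix m κ F[X]) : Prop :=
  LinearIndependent F (leadingColCoeff G)ᵀ

noncomputable def maxMinorDeg [CommRing R] [Fintype κ] [DecidableEq κ] (G : Matrix m κ R[X]) : ℕ :=
  univ.sup fun s : κ ↪ m => (G.submatrix (fun i => s i) id).det.natDegree

variable [Fintype κ]

theorem coeff_mulVec_leading_relation_eq_zero [Field F] (G : Matrix m κ F[X]) {g : κ → F}
    (hg : ∑ t, g t • (leadingColCoeff G)ᵀ t = 0) {D : ℕ} (hD : ∀ t, g t ≠ 0 → colDeg G t ≤ D)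
    (i : m) {d : ℕ} (hd : D ≤ d) :
    ((G *ᵥ fun t => C (g t) * X ^ (D - colDeg G t)) i).coeff d = 0 := by
  have hterm : ∀ t, (G i t * (C (g t) * X ^ (D - colDeg G t))).coeff d
      = g t * (G i t).coeff (d - D + colDeg G t) := by
    intro t
    by_cases hgt : g t = 0
    · simp [hgt]
    have := hD t hgt
    rw [mul_left_comm, coeff_C_mul, coeff_mul_X_pow', if_pos (by omega)]
    congr 2
    omega
  simp only [mulVec, dotProduct, finsetSum_coeff, hterm]
  rcases hd.eq_or_lt with rfl | hlt
  · simpa [leadingColCoeff] using congrFun hg i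
  · refine sum_eq_zero fun t _ => ?_
    rw [coeff_eq_zero_of_natDegree_lt (by have := natDegree_le_colDeg G i t; omega), mul_zero]

variable [DecidableEq κ]

theorem sum_colDeg_le_maxMinorDeg [Field F] {G : Matrix m κ F[X]} (hG : IsColReduced G) :
    ∑ t, colDeg G t ≤ maxMinorDeg G := by
  obtain ⟨s, hs⟩ := exists_det_submatrix_ne_zero_of_linearIndependent (leadingColCoeff G) hG
  have hcoeff : (G.submatrix s id).det.coeff (∑ t, colDeg G t)
      = ((leadingColCoeff G).submatrix s id).det :=
    coeff_det_sum_eq_det_coeff _ _ fun i t => natDegree_le_colDeg G (s i) t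
  exact (le_natDegree_of_ne_zero (hcoeff ▸ hs)).trans
    (le_sup (f := fun s : κ ↪ m => (G.submatrix s id).det.natDegree) (mem_univ s))

theorem maxMinorDeg_mul_of_isUnit_det [Field F] (G : Matrix m κ F[X]) {M : Matrix κ κ F[X]}
    (hM : IsUnit M.det) : maxMinorDeg (G * M) = maxMinorDeg G := by
  obtain ⟨r, hr, hrM⟩ := Polynomial.isUnit_iff.mp hM
  unfold maxMinorDeg
  congr 1
  funext s
  rw [det_submatrix_mul, ← hrM, natDegree_mul_C_of_isUnit hr]

/-- Given a dependency `g` among the leading column coefficients, pick `t₀` of largest degree `D`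
among the columns involved and replace column `t₀` by `∑ t, g t X ^ (D - ν_t) G_t`: its
degree-`D` terms cancel, and the transformation matrix has determinant `g t₀`. -/
theorem exists_isUnit_det_sum_colDeg_mul_lt [Field F] (G : Matrix m κ F[X])
    (hG : Function.Injective G.mulVec) (hred : ¬IsColReduced G) :
    ∃ M : Matrix κ κ F[X], IsUnit M.det ∧ ∑ t, colDeg (G * M) t < ∑ t, colDeg G t := by
  classical
  obtain ⟨g, hg, t₁, hgt₁⟩ := Fintype.not_linearIndependent_iff.mp hred
  obtain ⟨t₀, ht₀, ht₀max⟩ := exists_max_image {t | g t ≠ 0} (colDeg G) ⟨t₁, by simpa⟩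
  simp only [mem_filter, mem_univ, true_and] at ht₀ ht₀max
  set D := colDeg G t₀
  set c : κ → F[X] := fun t => C (g t) * X ^ (D - colDeg G t)
  have hcoeff : ∀ i d, D ≤ d → ((G *ᵥ c) i).coeff d = 0 := fun i _ hd =>
    coeff_mulVec_leading_relation_eq_zero G hg ht₀max i hd
  have hD : 0 < D := by
    by_contra! h0
    have hc : c t₀ ≠ 0 := by simpa [c] using ht₀
    refine hc (congrFun (hG (?_ : G *ᵥ c = G *ᵥ 0)) t₀)
    ext i d
    simpa using hcoeff i d (by omega)
  have hdeg : ∀ i, ((G *ᵥ c) i).natDegree < D := fun i => by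
    by_cases h : (G *ᵥ c) i = 0
    · simpa [h] using hD
    · exact (natDegree_lt_iff_degree_lt h).mpr ((degree_lt_iff_coeff_zero _ _).mpr (hcoeff i))
  have hcol : ∀ t, colDeg (G * (1 : Matrix κ κ F[X]).updateCol t₀ c) t
      = if t = t₀ then univ.sup fun i => ((G *ᵥ c) i).natDegree else colDeg G t := by
    intro t
    split_ifs with ht <;> simp [colDeg, mul_updateCol, ht]
  refine ⟨(1 : Matrix κ κ F[X]).updateCol t₀ c, ?_, ?_⟩
  · rw [det_one_updateCol]
    simpa [c, D] using ht₀
  · have hlt : (univ.sup fun i => ((G *ᵥ c) i).natDegree) < D :=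
      (Finset.sup_lt_iff hD).mpr fun i _ => hdeg i
    refine sum_lt_sum (fun t _ => ?_) ⟨t₀, mem_univ t₀, by simpa [hcol] using hlt⟩
    rw [hcol]
    split_ifs with ht
    · exact ht ▸ hlt.le
    · rfl

theorem exists_isUnit_det_isColReduced_mul [Field F] (G : Matrix m κ F[X])
    (hG : Function.Injective G.mulVec) :
    ∃ M : Matrix κ κ F[X], IsUnit M.det ∧ IsColReduced (G * M) := by
  induction hN : ∑ t, colDeg G t using Nat.strong_induction_on generalizing G with
  | _ N ih =>
  by_cases hred : IsColReduced G
  · exact ⟨1, by simp, by simpa⟩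
  obtain ⟨M, hM, hlt⟩ := exists_isUnit_det_sum_colDeg_mul_lt G hG hred
  obtain ⟨M', hM', hred'⟩ := ih _ (hN ▸ hlt) (G * M) (hG.mulVec_mul_of_isUnit_det hM) rfl
  exact ⟨M * M', by simpa using hM.mul hM', by rwa [← Matrix.mul_assoc]⟩

end ColumnDegrees

theorem natDegree_mulVec_le_of_mem_degreeLT {R m κ : Type*} [Semiring R] [Fintype m] [Fintype κ]
    (G : Matrix m κ R[X]) {u : κ → R[X]} {j : ℕ}
    (hu : ∀ t, u t ∈ degreeLT R (j + 1 - colDeg G t)) (i : m) : ((G *ᵥ u) i).natDegree ≤ j := by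
  refine natDegree_sum_le_of_forall_le _ _ fun t _ => ?_
  change (G i t * u t).natDegree ≤ j
  by_cases h : u t = 0
  · simp [h]
  have hut := (natDegree_lt_iff_degree_lt h).mpr (mem_degreeLT.mp (hu t))
  have hG := natDegree_le_colDeg G i t
  exact natDegree_mul_le.trans (by omega)

noncomputable def coeffsLE (R m : Type*) [Semiring R] (j : ℕ) :
    (m → R[X]) →ₗ[R] (m × Fin (j + 1) → R) :=
  LinearMap.pi fun p => lcoeff R p.2 ∘ₗ LinearMap.proj p.1

theorem card_support_eq_card_coeff_ne_zero {R : Type*} [Semiring R] [DecidableEq R] {p : R[X]}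
    {j : ℕ} (hp : p.natDegree ≤ j) : #p.support = #{e : Fin (j + 1) | p.coeff e ≠ 0} := by
  symm
  refine card_bij (fun e _ => e.val) (fun e he => by simpa using he) (fun _ _ _ _ => Fin.ext) ?_
  intro d hd
  exact ⟨⟨d, by have := le_natDegree_of_mem_supp d hd; omega⟩, by simpa using hd, rfl⟩

theorem wt_eq_hammingNorm_coeffsLE {F : Type*} [Field F] [DecidableEq F] {n j : ℕ}
    (v : Fin n → F[X]) (hv : ∀ i, (v i).natDegree ≤ j) :
    wt v = hammingNorm (coeffsLE F (Fin n) j v) := by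
  simp only [wt, hammingNorm, card_filter, Fintype.sum_prod_type,
    card_support_eq_card_coeff_ne_zero (hv _)]
  rfl

theorem exists_wt_le_of_isColReduced {F : Type*} [Field F] {n k : ℕ} (hk : 1 ≤ k)
    (G : Matrix (Fin n) (Fin k) F[X]) (hG : Function.Injective G.mulVec) (hred : IsColReduced G) :
    ∃ v ∈ imCode G, v ≠ 0 ∧ wt v ≤ (n - k) * (maxMinorDeg G / k + 1) + maxMinorDeg G + 1 := by
  classical
  set δ := maxMinorDeg G
  set j := δ / k
  set e : Fin k → ℕ := fun t => j + 1 - colDeg G t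
  let ι : (Π t, degreeLT F (e t)) →ₗ[F] Fin k → F[X] :=
    LinearMap.pi fun t => (degreeLT F (e t)).subtype ∘ₗ LinearMap.proj t
  have hι : Function.Injective ι := fun x y h =>
    funext fun t => Subtype.ext (congrFun h t)
  have hdim : Module.finrank F (Π t, degreeLT F (e t)) = ∑ t, e t := by
    simp [Module.finrank_pi_fintype, (degreeLTEquiv F _).finrank_eq]
  have hcount : k * (j + 1) ≤ ∑ t, e t + δ :=
    calc k * (j + 1) = ∑ _t : Fin k, (j + 1) := by simp
      _ ≤ ∑ t, (e t + colDeg G t) := sum_le_sum fun t _ => le_tsub_add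
      _ ≤ ∑ t, e t + δ := by
        rw [sum_add_distrib]
        exact Nat.add_le_add_left (sum_colDeg_le_maxMinorDeg hred) _
  have hδ : δ < k * (j + 1) := Nat.lt_mul_div_succ δ hk
  obtain ⟨x, hx0, hx⟩ := exists_ne_zero_hammingNorm_le
    (coeffsLE F (Fin n) j ∘ₗ G.mulVecLin.restrictScalars F ∘ₗ ι) (by omega)
  refine ⟨G *ᵥ ι x, ⟨ι x, rfl⟩, fun h => hx0 (hι (hG (h.trans (mulVec_zero G).symm))), ?_⟩
  rw [wt_eq_hammingNorm_coeffsLE _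
    (natDegree_mulVec_le_of_mem_degreeLT G (u := ι x) fun t => (x t).2)]
  change hammingNorm (coeffsLE F (Fin n) j (G *ᵥ ι x)) ≤ _ at hx
  simp only [Fintype.card_prod, Fintype.card_fin, hdim] at hx
  rw [Nat.sub_mul]
  generalize n * (j + 1) = N at hx ⊢
  generalize k * (j + 1) = K at hcount hδ ⊢
  omega

theorem dfree_le_wt {F : Type*} [Field F] {n : ℕ} {C : Set (Fin n → F[X])} {v : Fin n → F[X]}
    (hv : v ∈ C) (hv0 : v ≠ 0) : dfree C ≤ wt v :=
  Nat.sInf_le ⟨v, hv, hv0, rfl⟩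

theorem imCode_mul_subset {F : Type*} [Field F] {n k : ℕ} (G : Matrix (Fin n) (Fin k) F[X])
    (M : Matrix (Fin k) (Fin k) F[X]) : imCode (G * M) ⊆ imCode G := by
  rintro _ ⟨u, rfl⟩
  exact ⟨M *ᵥ u, (mulVec_mulVec u G M).symm⟩

theorem generalized_singleton_bound_general {F : Type*} [Field F] {n k δ : ℕ}
    (hk : 1 ≤ k)
    (G : Matrix (Fin n) (Fin k) (Polynomial F))
    (hfull : ∃ s : Fin k ↪ Fin n, (G.submatrix (fun i => s i) id).det ≠ 0)
    (hδ : δ = Finset.univ.sup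
      (fun s : Fin k ↪ Fin n => ((G.submatrix (fun i => s i) id).det).natDegree)) :
    dfree (imCode G) ≤ (n - k) * (δ / k + 1) + δ + 1 := by
  obtain ⟨s, hs⟩ := hfull
  have hG := G.mulVec_injective_of_det_submatrix_ne_zero s hs
  obtain ⟨M, hM, hred⟩ := exists_isUnit_det_isColReduced_mul G hG
  obtain ⟨v, hv, hv0, hwt⟩ :=
    exists_wt_le_of_isColReduced hk (G * M) (hG.mulVec_mul_of_isUnit_det hM) hred
  rw [maxMinorDeg_mul_of_isUnit_det G hM] at hwt
  subst hδ
  exact (dfree_le_wt (imCode_mul_subset G M hv) hv0).trans hwt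

/-- Generalized Singleton bound: the free distance of an `(n, k, δ)` convolutional code
satisfies `d_free ≤ (n-k)(⌊δ/k⌋ + 1) + δ + 1`. -/
theorem generalized_singleton_bound {F : Type*} [Field F] [DecidableEq F] {n k δ : ℕ}
    (hk : 1 ≤ k) (hkn : k < n)
    (G : Matrix (Fin n) (Fin k) (Polynomial F))
    (hfull : ∃ s : Fin k ↪ Fin n, (G.submatrix (fun i => s i) id).det ≠ 0)
    (hδ : δ = Finset.univ.sup
      (fun s : Fin k ↪ Fin n => ((G.submatrix (fun i => s i) id).det).natDegree)) :
    dfree (imCode G) ≤ (n - k) * (δ / k + 1) + δ + 1 :=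
  generalized_singleton_bound_general hk G hfull hδ
end

section
/- For any (n,k) convolutional code C and any j >= 0, the j-th column distance satisfies d_j^c(C) <= (n-k)(j+1) + 1. -/
open Polynomial Matrix Finset

/-! The constant matrix `G₀` has rank `k`, so `k` of its rows `ρ` are linearly independent.
The `k × k` polynomial matrix `A` formed by these rows of `G` then has a determinant with nonzero
constant term, which is invertible modulo `z ^ (j + 1)`; via the adjugate this gives an input `u`
with `(G u)_ρ ≡ e₁ (mod z ^ (j + 1))`. The codeword `v = G u` has `v₀ ≠ 0`, and its truncation
at degree `j` has weight exactly `1` on the rows `ρ` and at most `(n - k)(j + 1)` on the other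
`n - k` rows. -/
theorem Matrix.exists_linearIndependent_rows_of_rank_eq {F : Type*} [Field F] {m n : Type*}
    [Fintype m] [Fintype n] {A : Matrix m n F} {k : ℕ} (h : A.rank = k) :
    ∃ ρ : Fin k → m, LinearIndependent F fun i => A (ρ i) := by
  subst h
  obtain ⟨κ, a, ha, hspan, hli⟩ := exists_linearIndependent' F A.row
  have : Fintype κ := Fintype.ofInjective a ha
  have hcard : Fintype.card κ = A.rank := by
    rw [A.rank_eq_finrank_span_row, ← hspan, finrank_span_eq_card hli]
  let e : Fin A.rank ≃ κ := (Fintype.equivFinOfCardEq hcard).symm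
  exact ⟨a ∘ e, hli.comp e e.injective⟩

theorem Polynomial.isCoprime_X_pow_of_coeff_zero_ne_zero {F : Type*} [Field F] {p : F[X]}
    (hp : p.coeff 0 ≠ 0) (N : ℕ) : IsCoprime p (X ^ N) :=
  (((irreducible_X.coprime_iff_not_dvd).2 (mt X_dvd_iff.1 hp)).symm).pow_right

theorem Matrix.coeff_zero_det {R : Type*} [CommRing R] {ι : Type*} [Fintype ι] [DecidableEq ι]
    (A : Matrix ι ι R[X]) : A.det.coeff 0 = (A.map fun p => p.coeff 0).det :=
  RingHom.map_det constantCoeff A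

theorem Matrix.exists_mulVec_eq_add_X_pow_smul {F : Type*} [Field F] {ι : Type*} [Fintype ι]
    [DecidableEq ι] (A : Matrix ι ι F[X]) (hA : A.det.coeff 0 ≠ 0) (w : ι → F[X]) (N : ℕ) :
    ∃ u r : ι → F[X], A *ᵥ u = w + (X ^ N : F[X]) • r := by
  -- `a` inverts `det A` modulo `X ^ N`, and `A * adjugate A = det A • 1`
  obtain ⟨a, b, hab⟩ := isCoprime_X_pow_of_coeff_zero_ne_zero hA N
  refine ⟨a • A.adjugate *ᵥ w, -(b • w), ?_⟩
  rw [mulVec_smul, mulVec_mulVec, mul_adjugate, smul_mulVec, one_mulVec, smul_smul,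
    eq_sub_of_add_eq hab, smul_neg, smul_smul, sub_smul, one_smul, mul_comm b, sub_eq_add_neg]

theorem Polynomial.support_filter_le_add_X_pow_mul {R : Type*} [Semiring R] (p q : R[X]) (j : ℕ) :
    (p + X ^ (j + 1) * q).support.filter (· ≤ j) = p.support.filter (· ≤ j) := by
  ext m
  simp only [Finset.mem_filter, mem_support_iff, coeff_add, coeff_X_pow_mul']
  constructor <;> rintro ⟨h, hm⟩ <;> simp_all [show ¬ j + 1 ≤ m by omega]

theorem wtTrunc_le_of_injective {F : Type*} [Field F] {n k : ℕ} (v : Fin n → F[X])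
    {ρ : Fin k → Fin n} (hρ : Function.Injective ρ) (j : ℕ) :
    wtTrunc j v ≤ (n - k) * (j + 1) + ∑ b, ((v (ρ b)).support.filter (· ≤ j)).card := by
  classical
  set S := Finset.univ.image ρ
  have hS : S.card = k := by simp [S, Finset.card_image_of_injective _ hρ]
  have hrow : ∀ a, ((v a).support.filter (· ≤ j)).card ≤ j + 1 := fun a =>
    (Finset.card_le_card fun m hm => Finset.mem_range_succ_iff.2 (Finset.mem_filter.1 hm).2).trans
      (Finset.card_range _).le
  unfold wtTrunc
  rw [← Finset.sum_add_sum_compl S, Finset.sum_image fun _ _ _ _ h => hρ h, add_comm]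
  gcongr
  calc _ ≤ Sᶜ.card • (j + 1) := Finset.sum_le_card_nsmul _ _ _ fun a _ => hrow a
    _ = (n - k) * (j + 1) := by simp [Finset.card_compl, hS]

theorem dcol_le_wtTrunc {F : Type*} [Field F] {n : ℕ} {C : Set (Fin n → F[X])}
    {v : Fin n → F[X]} (hv : v ∈ C) (hv₀ : (fun i => (v i).coeff 0) ≠ 0) (j : ℕ) :
    dcol C j ≤ wtTrunc j v :=
  Nat.sInf_le ⟨v, hv, hv₀, rfl⟩

theorem column_distance_bound_general {F : Type*} [Field F] {n k j : ℕ}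
    (hk : 1 ≤ k)
    (G : Matrix (Fin n) (Fin k) (Polynomial F))
    (hG0 : (Matrix.of fun a b => (G a b).coeff 0).rank = k) :
    dcol (imCode G) j ≤ (n - k) * (j + 1) + 1 := by
  obtain ⟨ρ, hρ⟩ := exists_linearIndependent_rows_of_rank_eq hG0
  have hdet : (G.submatrix ρ id).det.coeff 0 ≠ 0 := by
    rw [coeff_zero_det]
    exact (isUnit_iff_isUnit_det _).1 (linearIndependent_rows_iff_isUnit.1 hρ) |>.ne_zero
  let i₀ : Fin k := ⟨0, hk⟩
  obtain ⟨u, r, hu⟩ :=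
    (G.submatrix ρ id).exists_mulVec_eq_add_X_pow_smul hdet (Pi.single i₀ 1) (j + 1)
  have hrow : ∀ b, (G *ᵥ u) (ρ b) = Pi.single i₀ 1 b + X ^ (j + 1) * r b := fun b =>
    congrFun hu b
  have hv₀ : (fun a => ((G *ᵥ u) a).coeff 0) ≠ 0 := fun h => by
    simpa [hrow] using congrFun h (ρ i₀)
  refine (dcol_le_wtTrunc (C := imCode G) (v := G *ᵥ u) ⟨u, rfl⟩ hv₀ j).trans ?_
  calc wtTrunc j (G *ᵥ u)
      ≤ (n - k) * (j + 1) + ∑ b, (((G *ᵥ u) (ρ b)).support.filter (· ≤ j)).card :=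
        wtTrunc_le_of_injective _ hρ.injective.of_comp j
    _ = (n - k) * (j + 1) + 1 := by
        simp only [hrow, support_filter_le_add_X_pow_mul]
        rw [Fintype.sum_eq_single i₀ fun b hb => by simp [hb], Pi.single_eq_same, ← C_1,
          support_C one_ne_zero]
        rfl

/-- Column distance bound: for a rate `k/n` convolutional code (with delay-free
full-rank encoder), `d_j^c ≤ (n-k)(j+1) + 1`. -/
theorem column_distance_bound {F : Type*} [Field F] [DecidableEq F] {n k j : ℕ}
    (hk : 1 ≤ k) (hkn : k < n)
    (G : Matrix (Fin n) (Fin k) (Polynomial F))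
    (hG0 : (Matrix.of fun a b => (G a b).coeff 0).rank = k) :
    dcol (imCode G) j ≤ (n - k) * (j + 1) + 1 :=
  column_distance_bound_general hk G hG0
end

section
/- Let C be an (n,k,delta) MDP convolutional code with L = floor(delta/k) + floor(delta/(n-k)), i.e., d_L^c(C) = (n-k)(L+1)+1. Suppose a codeword is sent over an erasure channel and decoding has been correct up to time t-1. If in the window of n-vectors v_t, ..., v_{t+L} at most (L+1)(n-k) symbol positions are erased, then the values at the erased positions within v_t are uniquely determined: any two codeword extensions of the correctly decoded prefix that agree with the received symbols on all unerased positions of the window agree on v_t. -/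
open Polynomial Matrix Finset

/-! The difference of the two codewords, shifted back by `t` time steps, is again a codeword:
the parity checks are time-invariant and the difference vanishes before time `t`. In the window
it is nonzero only at erased positions, so its truncated weight is at most
`(L+1)(n-k) < d_L^c`; by the definition of the column distance its coefficient at time `0`,
i.e. `v_t - w_t`, must vanish. -/

theorem Polynomial.coeff_iterate_divX {R : Type*} [Semiring R] (t : ℕ) (p : R[X]) (m : ℕ) :
    (divX^[t] p).coeff m = p.coeff (m + t) := by
  induction t generalizing m with
  | zero => rfl
  | succ t ih => rw [Function.iterate_succ_apply', coeff_divX, ih, add_right_comm, add_assoc]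

section kerCode

variable {F : Type*} [Field F] {r n : ℕ} {H : ℕ → Matrix (Fin r) (Fin n) F}

theorem sub_mem_kerCode {v w : Fin n → F[X]} (hv : v ∈ kerCode H) (hw : w ∈ kerCode H) :
    v - w ∈ kerCode H := by
  intro m a
  have hsplit : ∀ j, (fun b => (v b - w b).coeff j) =
      (fun b => (v b).coeff j) - fun b => (w b).coeff j := fun j => by ext; simp
  simp only [hsplit, mulVec_sub, Pi.sub_apply, sum_sub_distrib, hv m a, hw m a, sub_self]

theorem iterate_divX_mem_kerCode {x : Fin n → F[X]} (hx : x ∈ kerCode H) {t : ℕ}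
    (hpast : ∀ m < t, ∀ b, (x b).coeff m = 0) :
    (fun b => divX^[t] (x b)) ∈ kerCode H := by
  intro m a
  have hshift : ∀ i ∈ range (m + 1), (fun b => (divX^[t] (x b)).coeff (m - i)) =
      fun b => (x b).coeff (t + m - i) := fun i hi => by
    ext b
    rw [coeff_iterate_divX]
    congr 1
    have := mem_range.mp hi
    omega
  rw [sum_congr rfl fun i hi => by rw [hshift i hi], ← hx (t + m) a]
  refine sum_subset (range_subset_range.mpr (by omega)) fun i hi hi' => ?_
  have hzero : (fun b => (x b).coeff (t + m - i)) = 0 := by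
    ext b
    exact hpast _ (by simp only [mem_range] at hi hi'; omega) b
  simp [hzero]

end kerCode

theorem coeff_zero_eq_zero_of_wtTrunc_lt_dcol {F : Type*} [Field F] {n : ℕ}
    {C : Set (Fin n → F[X])} {j : ℕ} {u : Fin n → F[X]} (hu : u ∈ C)
    (hwt : wtTrunc j u < dcol C j) (b : Fin n) : (u b).coeff 0 = 0 := by
  by_contra hb
  have hne : (fun i => (u i).coeff 0) ≠ 0 := fun h => hb (congrFun h b)
  unfold dcol at hwt
  exact absurd hwt (not_lt.mpr (Nat.sInf_le ⟨u, hu, hne, rfl⟩))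

theorem wtTrunc_le_card {F : Type*} [Field F] {n j : ℕ} {u : Fin n → F[X]}
    (E : Finset (Fin (j + 1) × Fin n))
    (hE : ∀ (l : Fin (j + 1)) (b : Fin n), (l, b) ∉ E → (u b).coeff l = 0) :
    wtTrunc j u ≤ #E := by
  classical
  unfold wtTrunc
  rw [card_eq_sum_card_fiberwise (f := Prod.snd) (t := univ) fun _ _ => mem_univ _]
  refine sum_le_sum fun b _ => card_le_card_of_injOn (fun m => (Fin.ofNat (j + 1) m, b)) ?_ ?_
  · intro m hm
    simp only [coe_filter, Set.mem_ofPred_eq, mem_support_iff] at hm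
    simp only [coe_filter, Set.mem_ofPred_eq, and_true]
    by_contra hmE
    exact hm.1 (by simpa [Nat.mod_eq_of_lt (Nat.lt_succ_of_le hm.2)] using hE _ b hmE)
  · intro m hm m' hm' h
    simp only [coe_filter, Set.mem_ofPred_eq] at hm hm'
    simpa [Nat.mod_eq_of_lt (Nat.lt_succ_of_le hm.2), Nat.mod_eq_of_lt (Nat.lt_succ_of_le hm'.2)]
      using congrArg (fun p => p.1.val) h

theorem mdp_window_erasure_decoding_general {F : Type*} [Field F] {n k L : ℕ}
    (H : ℕ → Matrix (Fin (n - k)) (Fin n) F)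
    (hMDP : dcol (kerCode H) L = (n - k) * (L + 1) + 1)
    (t : ℕ) (v w : Fin n → Polynomial F)
    (hv : v ∈ kerCode H) (hw : w ∈ kerCode H)
    (hpast : ∀ m < t, ∀ b : Fin n, (v b).coeff m = (w b).coeff m)
    (E : Finset (Fin (L+1) × Fin n)) (hE : E.card ≤ (L + 1) * (n - k))
    (hagree : ∀ (l : Fin (L+1)) (b : Fin n), (l, b) ∉ E →
      (v b).coeff (t + l.val) = (w b).coeff (t + l.val)) :
    ∀ b : Fin n, (v b).coeff t = (w b).coeff t := by
  set u : Fin n → F[X] := fun b => divX^[t] ((v - w) b)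
  have hu_coeff : ∀ b m, (u b).coeff m = (v b).coeff (t + m) - (w b).coeff (t + m) := by
    intro b m
    simp [u, coeff_iterate_divX, add_comm]
  have hu_mem : u ∈ kerCode H :=
    iterate_divX_mem_kerCode (sub_mem_kerCode hv hw) fun m hm b => by
      simp [hpast m hm b]
  have hu_wt : wtTrunc L u < dcol (kerCode H) L := by
    have hwindow := wtTrunc_le_card E fun l b hl => by rw [hu_coeff, hagree l b hl, sub_self]
    rw [hMDP]
    linarith [mul_comm (L + 1) (n - k)]
  intro b
  simpa [hu_coeff, sub_eq_zero] using coeff_zero_eq_zero_of_wtTrunc_lt_dcol hu_mem hu_wt b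

/-- Erasure decoding with an MDP convolutional code: if decoding was correct up to time
`t - 1` and in the window `v_t, …, v_{t+L}` at most `(L+1)(n-k)` symbols are erased,
then `v_t` is uniquely determined: any two codeword extensions agreeing with the
received symbols on the unerased positions of the window agree at time `t`. -/
theorem mdp_window_erasure_decoding {F : Type*} [Field F] {n k δ ν L : ℕ}
    (hk : 1 ≤ k) (hkn : k < n)
    (H : ℕ → Matrix (Fin (n - k)) (Fin n) F) (hν : ∀ i, ν < i → H i = 0)
    (hL : L = δ / k + δ / (n - k))
    (hMDP : dcol (kerCode H) L = (n - k) * (L + 1) + 1)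
    (t : ℕ) (v w : Fin n → Polynomial F)
    (hv : v ∈ kerCode H) (hw : w ∈ kerCode H)
    (hpast : ∀ m < t, ∀ b : Fin n, (v b).coeff m = (w b).coeff m)
    (E : Finset (Fin (L+1) × Fin n)) (hE : E.card ≤ (L + 1) * (n - k))
    (hagree : ∀ (l : Fin (L+1)) (b : Fin n), (l, b) ∉ E →
      (v b).coeff (t + l.val) = (w b).coeff (t + l.val)) :
    ∀ b : Fin n, (v b).coeff t = (w b).coeff t :=
  mdp_window_erasure_decoding_general H hMDP t v w hv hw hpast E hE hagree
end
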